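/- Let K be an odd positive integer and let m be an even integer with 2 ≤ m ≤ K. For l ∈ {0,…,K} define h(l) = (1/C(K,m)) · ( Σ_{j=m/2+1}^{m} C(l,j)·C(K−l, m−j) + (1/2)·C(l, m/2)·C(K−l, m/2) ), and define γ_Sub : {0,…,K} → ℝ by γ_Sub(l) = 1 − 2h(l) for l ≤ (K−1)/2 and γ_Sub(l) = 1 − 2h(K−l) for l ≥ (K+1)/2. Then for every l ∈ {0,…,K}, γ_Sub(l)·1{l ≥ (K+1)/2} + (1 − γ_Sub(l))/2 = h(l). (In particular γ_Sub(l) = γ_Sub(K−l) for all l, so data-dependent randomized response with noise function γ_Sub outputs 1 with probability exactly h(l) conditioned on the sum of observed outcomes being l, matching the majority of m subsampled outcomes with ties broken by a fair coin.) -/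

import Mathlib

open Finset

/-!
Vandermonde's identity splits `C(a + b, 2t)` into the samples with a strict majority from the
`a` side, those with a strict majority from the `b` side, and the ties `C(a, t) C(b, t)`.
Hence `h(l) + h(K - l) = 1`, which is exactly what the case `l ≥ (K + 1) / 2` requires; the
case `l ≤ (K - 1) / 2` is immediate from the definition of `γ_Sub`.
-/

namespace Nat

theorem sum_range_choose_mul_choose_reflect (a b t : ℕ) :
    ∑ j ∈ range t, a.choose j * b.choose (2 * t - j)
      = ∑ j ∈ Icc (t + 1) (2 * t), b.choose j * a.choose (2 * t - j) := by
  refine sum_nbij' (fun j => 2 * t - j) (fun j => 2 * t - j) ?_ ?_ ?_ ?_ ?_ <;>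
    intro j hj <;> simp only [mem_range, mem_Icc] at hj ⊢
  · omega
  · omega
  · omega
  · omega
  · rw [Nat.sub_sub_self (by omega), Nat.mul_comm]

theorem add_choose_two_mul_eq_majority_add_tie (a b t : ℕ) :
    (a + b).choose (2 * t)
      = ∑ j ∈ Icc (t + 1) (2 * t), a.choose j * b.choose (2 * t - j)
        + ∑ j ∈ Icc (t + 1) (2 * t), b.choose j * a.choose (2 * t - j)
        + a.choose t * b.choose t := by
  have htt : 2 * t - t = t := by omega
  have hIco : Ico (t + 1) (2 * t + 1) = Icc (t + 1) (2 * t) := rfl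
  rw [add_choose_eq, Finset.Nat.sum_antidiagonal_eq_sum_range_succ_mk,
    ← sum_range_add_sum_Ico _ (by omega : t + 1 ≤ 2 * t + 1), sum_range_succ,
    sum_range_choose_mul_choose_reflect, htt, hIco]
  ring

end Nat

noncomputable def majorityProb (K m l : ℕ) : ℝ :=
  ((∑ j ∈ Icc (m / 2 + 1) m, (l.choose j : ℝ) * ((K - l).choose (m - j) : ℝ))
    + (1 / 2) * (l.choose (m / 2) : ℝ) * ((K - l).choose (m / 2) : ℝ)) / (K.choose m : ℝ)

theorem majorityProb_add_majorityProb_sub {K m l : ℕ} (hm : Even m) (hmK : m ≤ K)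
    (hl : l ≤ K) : majorityProb K m l + majorityProb K m (K - l) = 1 := by
  obtain ⟨t, rfl⟩ := hm.two_dvd
  have hsplit := Nat.add_choose_two_mul_eq_majority_add_tie l (K - l) t
  rw [Nat.add_sub_cancel' hl] at hsplit
  have hC : (K.choose (2 * t) : ℝ) ≠ 0 := by exact_mod_cast (Nat.choose_pos hmK).ne'
  rw [majorityProb, majorityProb, Nat.sub_sub_self hl, ← add_div, div_eq_one_iff_eq hC,
    Nat.mul_div_cancel_left t two_pos, hsplit]
  push_cast
  ring

theorem statement1 (K m : ℕ)
    (hm : Even m) (hmK : m ≤ K)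
    (h γSub : ℕ → ℝ)
    (hh : ∀ l, h l = ((∑ j ∈ Finset.Icc (m / 2 + 1) m,
        (l.choose j : ℝ) * ((K - l).choose (m - j) : ℝ))
        + (1 / 2) * (l.choose (m / 2) : ℝ) * ((K - l).choose (m / 2) : ℝ))
        / (K.choose m : ℝ))
    (hγlo : ∀ l, l ≤ (K - 1) / 2 → γSub l = 1 - 2 * h l)
    (hγhi : ∀ l, (K + 1) / 2 ≤ l → γSub l = 1 - 2 * h (K - l)) :
    ∀ l ≤ K, γSub l * (if (K + 1) / 2 ≤ l then (1 : ℝ) else 0)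
      + (1 - γSub l) / 2 = h l := by
  obtain rfl : h = majorityProb K m := funext hh
  intro l hl
  by_cases hhigh : (K + 1) / 2 ≤ l
  · rw [if_pos hhigh, hγhi l hhigh]
    linarith [majorityProb_add_majorityProb_sub hm hmK hl]
  · rw [if_neg hhigh, hγlo l (by omega)]
    ring
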